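/- arXiv:1811.06492 — 5 statements merged into one kernel-verified Lean document; each statement's English description precedes it below -/
import Mathlib

section
/- For the one-layer softmax classifier y-hat = softmax(Wx) with cross-entropy loss L(x,y) = -log(softmax(Wx)_s) for true class s, the FGSM adversarial example x' = x + epsilon * sign(grad_x L(x,y)) satisfies L(x,y) <= L(x',y) for every epsilon > 0. -/
noncomputable def softmax {k : ℕ} (z : Fin k → ℝ) (i : Fin k) : ℝ :=
  Real.exp (z i) / ∑ j, Real.exp (z j)

/-- For the one-layer softmax classifier with cross-entropy loss
`L(x) = -log(softmax(Wx)_s)`, the FGSM adversarial example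
`x' = x + ε · sign(∇ₓ L)` does not decrease the loss, for every `ε > 0`. -/
theorem fgsm_one_layer_loss_increase (k n : ℕ)
    (W : Matrix (Fin k) (Fin n) ℝ) (x : Fin n → ℝ) (s : Fin k)
    (L : (Fin n → ℝ) → ℝ)
    (hL : ∀ z, L z = -Real.log (softmax (W.mulVec z) s))
    (ε : ℝ) (hε : 0 < ε) (x' : Fin n → ℝ)
    (hx' : ∀ i, x' i = x i +
      ε * Real.sign (∑ j, softmax (W.mulVec x) j * W j i - W s i)) :
    L x ≤ L x' := by
  have hk : Nonempty (Fin k) := ⟨s⟩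
  set a : Fin k → ℝ := W.mulVec x with ha
  set a' : Fin k → ℝ := W.mulVec x' with ha'
  set S : ℝ := ∑ j, Real.exp (a j) with hS
  have hSpos : 0 < S := Finset.sum_pos (fun j _ => Real.exp_pos _) Finset.univ_nonempty
  set p : Fin k → ℝ := softmax a with hp
  have hp1 : ∑ j, p j = 1 := by
    simp only [hp, softmax, ← Finset.sum_div, ← hS]
    field_simp
  have hppos : ∀ j, 0 < p j := fun j => div_pos (Real.exp_pos _) hSpos
  set g : Fin n → ℝ := fun i => ∑ j, p j * W j i - W s i with hg
  set d : Fin n → ℝ := fun i => Real.sign (g i) with hd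
  set c : Fin k → ℝ := fun j => ∑ i, W j i * d i with hc
  have ha'j : ∀ j, a' j = a j + ε * c j := by
    intro j
    simp only [ha', ha, Matrix.mulVec, dotProduct, hc]
    rw [Finset.mul_sum, ← Finset.sum_add_distrib]
    refine Finset.sum_congr rfl fun i _ => ?_
    rw [hx' i]; ring
  -- key Jensen step
  have key : S * Real.exp (ε * ∑ j, p j * c j) ≤ ∑ j, Real.exp (a' j) := by
    have hgm := Real.geom_mean_le_arith_mean_weighted Finset.univ p
      (fun j => Real.exp (ε * c j)) (fun j _ => (hppos j).le) hp1
      (fun j _ => (Real.exp_pos _).le)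
    have hprod : (∏ j, Real.exp (ε * c j) ^ p j) = Real.exp (ε * ∑ j, p j * c j) := by
      rw [Finset.mul_sum, Real.exp_sum]
      refine Finset.prod_congr rfl fun j _ => ?_
      rw [← Real.exp_mul]; ring_nf
    rw [hprod] at hgm
    calc S * Real.exp (ε * ∑ j, p j * c j) ≤ S * ∑ j, p j * Real.exp (ε * c j) := by
          exact mul_le_mul_of_nonneg_left hgm hSpos.le
      _ = ∑ j, Real.exp (a' j) := by
          rw [Finset.mul_sum]
          refine Finset.sum_congr rfl fun j _ => ?_
          rw [ha'j j, Real.exp_add]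
          simp only [hp, softmax, ← hS]
          field_simp
  -- the gradient term is nonnegative
  have hgrad : c s ≤ ∑ j, p j * c j := by
    have hswap : (∑ j, p j * c j) - c s = ∑ i, g i * d i := by
      simp only [hc, Finset.mul_sum, hg]
      rw [Finset.sum_comm, ← Finset.sum_sub_distrib]
      refine Finset.sum_congr rfl fun i _ => ?_
      rw [sub_mul, Finset.sum_mul]
      congr 1
      exact Finset.sum_congr rfl fun j _ => by ring
    have hnn : 0 ≤ ∑ i, g i * d i := by
      refine Finset.sum_nonneg fun i _ => ?_
      simp only [hd]
      rcases lt_trichotomy (g i) 0 with h | h | h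
      · rw [Real.sign_of_neg h]; nlinarith
      · simp [h]
      · rw [Real.sign_of_pos h]; nlinarith
    linarith [hswap ▸ hnn]
  -- assemble
  rw [hL x, hL x']
  have hlog : ∀ z : Fin k → ℝ, Real.log (softmax z s)
      = z s - Real.log (∑ j, Real.exp (z j)) := by
    intro z
    have hpos : 0 < ∑ j, Real.exp (z j) :=
      Finset.sum_pos (fun j _ => Real.exp_pos _) Finset.univ_nonempty
    rw [softmax, Real.log_div (Real.exp_ne_zero _) hpos.ne', Real.log_exp]
  rw [hlog, hlog]
  have hS'pos : 0 < ∑ j, Real.exp (a' j) :=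
    Finset.sum_pos (fun j _ => Real.exp_pos _) Finset.univ_nonempty
  have hlogS' : Real.log S + ε * ∑ j, p j * c j ≤ Real.log (∑ j, Real.exp (a' j)) := by
    have := Real.log_le_log (by positivity) key
    rwa [Real.log_mul hSpos.ne' (Real.exp_ne_zero _), Real.log_exp] at this
  have has' : a' s = a s + ε * c s := ha'j s
  have : ε * c s ≤ ε * ∑ j, p j * c j := mul_le_mul_of_nonneg_left hgrad hε.le
  simp only [← ha, ← ha', ← hS] at *
  linarith
end

section
/- For the two-layer ReLU network y-hat = softmax(V sigma(Wx)) with cross-entropy loss L(x,y) = -log(y-hat_s), if every entry of Wx is nonzero and 0 < epsilon < |Wx|_min / ||W||_infinity, then the FGSM adversarial x' = x + epsilon * sign(grad_x L(x,y)) satisfies L(x,y) <= L(x',y). -/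
lemma mul_sign_eq_abs (x : ℝ) : x * Real.sign x = |x| := by
  rcases lt_trichotomy x 0 with h | h | h
  · rw [Real.sign_of_neg h, abs_of_neg h]; ring
  · simp [h]
  · rw [Real.sign_of_pos h, abs_of_pos h]; ring

lemma abs_sign_le_one (x : ℝ) : |Real.sign x| ≤ 1 := by
  rcases lt_trichotomy x 0 with h | h | h
  · rw [Real.sign_of_neg h]; norm_num
  · simp [h]
  · rw [Real.sign_of_pos h]; norm_num

lemma jensen_exp {k : ℕ} (p v : Fin k → ℝ) (hp : ∀ j, 0 ≤ p j)
    (hs : ∑ j, p j = 1) :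
    Real.exp (∑ j, p j * v j) ≤ ∑ j, p j * Real.exp (v j) := by
  set m := ∑ j, p j * v j with hm
  have key : ∀ j, p j * (Real.exp m * (v j - m + 1)) ≤ p j * Real.exp (v j) := by
    intro j
    apply mul_le_mul_of_nonneg_left _ (hp j)
    have h1 := Real.add_one_le_exp (v j - m)
    have h2 : Real.exp m * (v j - m + 1) ≤ Real.exp m * Real.exp (v j - m) :=
      mul_le_mul_of_nonneg_left h1 (Real.exp_pos m).le
    calc Real.exp m * (v j - m + 1) ≤ Real.exp m * Real.exp (v j - m) := h2
      _ = Real.exp (v j) := by rw [← Real.exp_add]; ring_nf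
  calc Real.exp m = Real.exp m * ((∑ j, p j * v j) + (1 - m) * ∑ j, p j) := by
        rw [hs, ← hm]; ring
    _ = ∑ j, p j * (Real.exp m * (v j - m + 1)) := by
        rw [mul_add, Finset.mul_sum, Finset.mul_sum, Finset.mul_sum,
          ← Finset.sum_add_distrib]
        exact Finset.sum_congr rfl fun j _ => by ring
    _ ≤ ∑ j, p j * Real.exp (v j) := Finset.sum_le_sum fun j _ => key j

lemma swap_helper {α β : Type*} [Fintype β] (A : Finset α) (c : α → ℝ)
    (W : α → β → ℝ) (σ : β → ℝ) (ε : ℝ) :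
    ∑ a ∈ A, c a * (ε * ∑ i, W a i * σ i)
      = ε * ∑ i, (∑ a ∈ A, c a * W a i) * σ i := by
  simp only [Finset.mul_sum, Finset.sum_mul]
  rw [Finset.sum_comm]
  apply Finset.sum_congr rfl
  intro i _
  apply Finset.sum_congr rfl
  intro a _
  ring

lemma swap2 {α β : Type*} [Fintype α] (A : Finset β) (p : α → ℝ) (f : α → β → ℝ) :
    ∑ j, p j * ∑ a ∈ A, f j a = ∑ a ∈ A, ∑ j, p j * f j a := by
  simp only [Finset.mul_sum]
  exact Finset.sum_comm

/-- FGSM loss increase for the two-layer ReLU network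
`ŷ = softmax(V σ(Wx))`: if all entries of `Wx` are nonzero and
`0 < ε < |Wx|_min / ‖W‖∞`, then the FGSM adversarial
`x' = x + ε · sign(∇ₓ L)` does not decrease the cross-entropy loss. -/
theorem fgsm_two_layer_loss_increase (l n k : ℕ) [NeZero l]
    (W : Matrix (Fin l) (Fin n) ℝ) (V : Matrix (Fin k) (Fin l) ℝ)
    (x : Fin n → ℝ) (s : Fin k) (ε : ℝ)
    (N : (Fin n → ℝ) → Fin k → ℝ)
    (hN : ∀ z j, N z j = ∑ a, V j a * max (W.mulVec z a) 0)
    (L : (Fin n → ℝ) → ℝ)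
    (hL : ∀ z, L z = -Real.log (softmax (N z) s))
    (hnz : ∀ i, W.mulVec x i ≠ 0)
    (hε0 : 0 < ε)
    (hε : ε < (Finset.univ.inf' Finset.univ_nonempty
        (fun i => |W.mulVec x i|)) /
      (Finset.univ.sup' Finset.univ_nonempty (fun i => ∑ m, |W i m|)))
    (x' : Fin n → ℝ)
    (hx' : ∀ i, x' i = x i + ε * Real.sign
      (∑ j, softmax (N x) j *
          (∑ a ∈ Finset.univ.filter (fun i' => 0 < W.mulVec x i'), V j a * W a i) -
        ∑ a ∈ Finset.univ.filter (fun i' => 0 < W.mulVec x i'), V s a * W a i)) :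
    L x ≤ L x' := by
  classical
  set A : Finset (Fin l) := Finset.univ.filter (fun i' => 0 < W.mulVec x i') with hA
  set g : Fin n → ℝ := fun i =>
    ∑ j, softmax (N x) j * (∑ a ∈ A, V j a * W a i) - ∑ a ∈ A, V s a * W a i with hg
  set σg : Fin n → ℝ := fun i => Real.sign (g i) with hσ
  have hx2 : ∀ i, x' i = x i + ε * σg i := fun i => hx' i
  -- difference of pre-activations
  have hdiff : ∀ a, W.mulVec x' a - W.mulVec x a = ε * ∑ i, W a i * σg i := by
    intro a
    simp only [Matrix.mulVec, dotProduct]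
    rw [← Finset.sum_sub_distrib, Finset.mul_sum]
    refine Finset.sum_congr rfl fun i _ => ?_
    rw [hx2 i]
    ring
  set Inf := Finset.univ.inf' Finset.univ_nonempty (fun i => |W.mulVec x i|) with hInf
  set Sup := Finset.univ.sup' Finset.univ_nonempty (fun i : Fin l => ∑ m, |W i m|) with hSup
  have hSup_pos : 0 < Sup := by
    obtain ⟨a0⟩ : Nonempty (Fin l) := ⟨⟨0, Nat.pos_of_ne_zero (NeZero.ne l)⟩⟩
    rcases lt_or_ge 0 Sup with h | h
    · exact h
    · exfalso
      have hrow : ∑ m, |W a0 m| ≤ 0 :=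
        le_trans (Finset.le_sup' (fun i : Fin l => ∑ m, |W i m|) (Finset.mem_univ a0)) h
      have hz : ∑ m, |W a0 m| = 0 :=
        le_antisymm hrow (Finset.sum_nonneg fun m _ => abs_nonneg (W a0 m))
      have hrow0 : ∀ m, W a0 m = 0 := fun m => abs_eq_zero.mp <|
        (Finset.sum_eq_zero_iff_of_nonneg (fun m _ => abs_nonneg (W a0 m))).mp hz m
          (Finset.mem_univ m)
      apply hnz a0
      simp [Matrix.mulVec, dotProduct, hrow0]
  have hεS : ε * Sup < Inf := (lt_div_iff₀ hSup_pos).mp hε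
  have hbound : ∀ a, |W.mulVec x' a - W.mulVec x a| < |W.mulVec x a| := by
    intro a
    rw [hdiff a]
    have h1 : |∑ i, W a i * σg i| ≤ ∑ i, |W a i| := by
      calc |∑ i, W a i * σg i| ≤ ∑ i, |W a i * σg i| := Finset.abs_sum_le_sum_abs _ _
        _ ≤ ∑ i, |W a i| := by
            refine Finset.sum_le_sum fun i _ => ?_
            rw [abs_mul]
            calc |W a i| * |σg i| ≤ |W a i| * 1 :=
              mul_le_mul_of_nonneg_left (abs_sign_le_one (g i)) (abs_nonneg _)
              _ = |W a i| := mul_one _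
    calc |ε * ∑ i, W a i * σg i| = ε * |∑ i, W a i * σg i| := by
          rw [abs_mul, abs_of_pos hε0]
      _ ≤ ε * ∑ i, |W a i| := mul_le_mul_of_nonneg_left h1 hε0.le
      _ ≤ ε * Sup := mul_le_mul_of_nonneg_left
          (Finset.le_sup' (fun i : Fin l => ∑ m, |W i m|) (Finset.mem_univ a)) hε0.le
      _ < Inf := hεS
      _ ≤ |W.mulVec x a| := Finset.inf'_le _ (Finset.mem_univ a)
  have hkey : ∀ a, max (W.mulVec x' a) 0 - max (W.mulVec x a) 0
      = if a ∈ A then W.mulVec x' a - W.mulVec x a else 0 := by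
    intro a
    have hb := abs_lt.mp (hbound a)
    by_cases hmem : a ∈ A
    · have hpos : 0 < W.mulVec x a := by
        have := hmem
        rw [hA, Finset.mem_filter] at this
        exact this.2
      have hpos' : 0 < W.mulVec x' a := by
        rw [abs_of_pos hpos] at hb
        linarith [hb.1]
      rw [if_pos hmem, max_eq_left hpos'.le, max_eq_left hpos.le]
    · have hneg : W.mulVec x a < 0 := by
        have h1 : ¬ 0 < W.mulVec x a := by
          intro hc
          exact hmem (by rw [hA, Finset.mem_filter]; exact ⟨Finset.mem_univ a, hc⟩)
        rcases (hnz a).lt_or_gt with h | h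
        · exact h
        · exact absurd h h1
      have hneg' : W.mulVec x' a < 0 := by
        rw [abs_of_neg hneg] at hb
        linarith [hb.2]
      rw [if_neg hmem, max_eq_right hneg'.le, max_eq_right hneg.le, sub_self]
  -- logit increments
  set v : Fin k → ℝ := fun j => N x' j - N x j with hvdef
  have hv : ∀ j, v j = ∑ a ∈ A, V j a * (ε * ∑ i, W a i * σg i) := by
    intro j
    show N x' j - N x j = _
    rw [hN, hN, ← Finset.sum_sub_distrib]
    have hc : ∀ a ∈ Finset.univ,
        V j a * max (W.mulVec x' a) 0 - V j a * max (W.mulVec x a) 0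
        = if a ∈ A then V j a * (ε * ∑ i, W a i * σg i) else 0 := by
      intro a _
      rw [← mul_sub, hkey a]
      by_cases hmem : a ∈ A
      · rw [if_pos hmem, if_pos hmem, hdiff a]
      · rw [if_neg hmem, if_neg hmem, mul_zero]
    rw [Finset.sum_congr rfl hc, Finset.sum_ite_mem, Finset.univ_inter]
  -- softmax facts
  have hS_pos : 0 < ∑ j, Real.exp (N x j) :=
    Finset.sum_pos (fun j _ => Real.exp_pos _) ⟨s, Finset.mem_univ s⟩
  have hS'_pos : 0 < ∑ j, Real.exp (N x' j) :=
    Finset.sum_pos (fun j _ => Real.exp_pos _) ⟨s, Finset.mem_univ s⟩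
  have hp_nonneg : ∀ j, 0 ≤ softmax (N x) j := fun j =>
    div_nonneg (Real.exp_pos _).le hS_pos.le
  have hp_sum : ∑ j, softmax (N x) j = 1 := by
    unfold softmax
    rw [← Finset.sum_div, div_self hS_pos.ne']
  have hLform : ∀ z : Fin n → ℝ, 0 < (∑ j, Real.exp (N z j)) →
      L z = Real.log (∑ j, Real.exp (N z j)) - N z s := by
    intro z hz
    rw [hL]
    unfold softmax
    rw [Real.log_div (Real.exp_ne_zero _) hz.ne', Real.log_exp]
    ring
  set Q : ℝ := ∑ j, softmax (N x) j * Real.exp (v j) with hQ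
  set m : ℝ := ∑ j, softmax (N x) j * v j with hm
  have hjen : Real.exp m ≤ Q := jensen_exp _ _ hp_nonneg hp_sum
  have hQ_pos : 0 < Q := lt_of_lt_of_le (Real.exp_pos m) hjen
  have hlogQ : m ≤ Real.log Q := (Real.le_log_iff_exp_le hQ_pos).mpr hjen
  have hS' : ∑ j, Real.exp (N x' j) = (∑ j, Real.exp (N x j)) * Q := by
    rw [hQ, Finset.mul_sum]
    refine Finset.sum_congr rfl fun j _ => ?_
    have hnx' : N x' j = N x j + v j := by rw [hvdef]; ring
    unfold softmax
    rw [hnx', Real.exp_add]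
    field_simp
    try ring
  -- the algebraic identity : m - v s = ε * ∑ i, g i * σg i
  have halg : m - v s = ε * ∑ i, g i * σg i := by
    have h2 : v s = ε * ∑ i, (∑ a ∈ A, V s a * W a i) * σg i := by
      rw [hv s]; exact swap_helper A (fun a => V s a) (fun a i => W a i) σg ε
    have h1 : m = ε * ∑ i,
        (∑ j, softmax (N x) j * (∑ a ∈ A, V j a * W a i)) * σg i := by
      calc m = ∑ j, softmax (N x) j * ∑ a ∈ A, V j a * (ε * ∑ i, W a i * σg i) := by
            rw [hm]; exact Finset.sum_congr rfl fun j _ => by rw [hv j]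
        _ = ∑ a ∈ A, ∑ j, softmax (N x) j * (V j a * (ε * ∑ i, W a i * σg i)) :=
            swap2 A _ _
        _ = ∑ a ∈ A, (∑ j, softmax (N x) j * V j a) * (ε * ∑ i, W a i * σg i) := by
            refine Finset.sum_congr rfl fun a _ => ?_
            rw [Finset.sum_mul]
            exact Finset.sum_congr rfl fun j _ => (mul_assoc _ _ _).symm
        _ = ε * ∑ i, (∑ a ∈ A, (∑ j, softmax (N x) j * V j a) * W a i) * σg i :=
            swap_helper A _ (fun a i => W a i) σg ε
        _ = ε * ∑ i, (∑ j, softmax (N x) j * (∑ a ∈ A, V j a * W a i)) * σg i := by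
            congr 1
            refine Finset.sum_congr rfl fun i _ => ?_
            congr 1
            rw [swap2 A (fun j => softmax (N x) j) (fun j a => V j a * W a i)]
            refine Finset.sum_congr rfl fun a _ => ?_
            rw [Finset.sum_mul]
            exact Finset.sum_congr rfl fun j _ => mul_assoc _ _ _
    rw [h1, h2, ← mul_sub, ← Finset.sum_sub_distrib]
    congr 1
    refine Finset.sum_congr rfl fun i _ => ?_
    rw [← sub_mul, hg]
  have hnonneg : 0 ≤ ε * ∑ i, g i * σg i := by
    apply mul_nonneg hε0.le
    apply Finset.sum_nonneg
    intro i _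
    rw [hσ]
    rw [mul_sign_eq_abs (g i)]
    exact abs_nonneg _
  have hvs_le : v s ≤ Real.log Q := by
    have hms : 0 ≤ m - v s := by rw [halg]; exact hnonneg
    linarith
  rw [hLform x hS_pos, hLform x' hS'_pos, hS',
    Real.log_mul hS_pos.ne' hQ_pos.ne']
  have hNs : N x' s = N x s + v s := by rw [hvdef]; ring
  rw [hNs]
  linarith
end

section
/- Let W be a k×n matrix, x in R^n, t a target class index, i a coordinate, and set A = sum_{j=1}^k exp((Wx)_j) w_{ji} - w_{ti} sum_{j=1}^k exp((Wx)_j), assumed nonzero. If x' satisfies ||x'-x||_infinity <= epsilon with epsilon < (1/||W||_infinity) * log(1 + |A| / (sum_{j=1}^k |w_{ji} - w_{ti}| exp((Wx)_j))), then B = sum_{j=1}^k exp((Wx')_j) w_{ji} - w_{ti} sum_{j=1}^k exp((Wx')_j) has the same sign as A. -/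
/-- Sign stability of the targeted-loss gradient component: if
`A = ∑ j exp((Wx)_j) w_{ji} - w_{ti} ∑ j exp((Wx)_j)` is nonzero and
`‖x'-x‖∞ ≤ ε < (1/‖W‖∞) log(1 + |A| / ∑ j |w_{ji}-w_{ti}| exp((Wx)_j))`,
then the corresponding quantity `B` at `x'` has the same sign as `A`. -/
theorem targeted_gradient_sign_stability (k n : ℕ) [NeZero k]
    (W : Matrix (Fin k) (Fin n) ℝ) (x x' : Fin n → ℝ) (t : Fin k) (i : Fin n)
    (ε : ℝ)
    (A : ℝ)
    (hA : A = ∑ j, Real.exp (W.mulVec x j) * W j i -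
      W t i * ∑ j, Real.exp (W.mulVec x j))
    (hAnz : A ≠ 0)
    (hpert : ‖x' - x‖ ≤ ε)
    (hε : ε < (1 / Finset.univ.sup' Finset.univ_nonempty
        (fun i' => ∑ m, |W i' m|)) *
      Real.log (1 + |A| / ∑ j, |W j i - W t i| * Real.exp (W.mulVec x j))) :
    Real.sign (∑ j, Real.exp (W.mulVec x' j) * W j i -
      W t i * ∑ j, Real.exp (W.mulVec x' j)) = Real.sign A := by
  set M := Finset.univ.sup' Finset.univ_nonempty (fun i' : Fin k => ∑ m, |W i' m|) with hMdef
  set S := ∑ j, |W j i - W t i| * Real.exp (W.mulVec x j) with hSdef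
  set B := ∑ j, Real.exp (W.mulVec x' j) * W j i -
      W t i * ∑ j, Real.exp (W.mulVec x' j) with hBdef
  have hA' : A = ∑ j, (W j i - W t i) * Real.exp (W.mulVec x j) := by
    rw [hA, Finset.mul_sum, ← Finset.sum_sub_distrib]
    exact Finset.sum_congr rfl fun j _ => by ring
  have hB' : B = ∑ j, (W j i - W t i) * Real.exp (W.mulVec x' j) := by
    rw [hBdef, Finset.mul_sum, ← Finset.sum_sub_distrib]
    exact Finset.sum_congr rfl fun j _ => by ring
  -- S ≥ |A| > 0
  have hAS : |A| ≤ S := by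
    rw [hA', hSdef]
    calc |∑ j, (W j i - W t i) * Real.exp (W.mulVec x j)|
        ≤ ∑ j, |(W j i - W t i) * Real.exp (W.mulVec x j)| := Finset.abs_sum_le_sum_abs _ _
      _ = ∑ j, |W j i - W t i| * Real.exp (W.mulVec x j) := by
          refine Finset.sum_congr rfl fun j _ => ?_
          rw [abs_mul, abs_of_pos (Real.exp_pos _)]
  have hApos : 0 < |A| := abs_pos.mpr hAnz
  have hSpos : 0 < S := lt_of_lt_of_le hApos hAS
  -- M ≥ 0, and in fact M > 0 (else contradiction)
  have hMnonneg : 0 ≤ M := by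
    have := Finset.le_sup' (fun i' : Fin k => ∑ m, |W i' m|)
      (Finset.mem_univ (Classical.arbitrary (Fin k)))
    refine le_trans ?_ this
    exact Finset.sum_nonneg fun m _ => abs_nonneg _
  have hεnonneg : 0 ≤ ε := le_trans (norm_nonneg _) hpert
  have hMpos : 0 < M := by
    rcases hMnonneg.lt_or_eq with h | h
    · exact h
    · exfalso
      rw [← h, div_zero, zero_mul] at hε
      linarith
  -- from hε: exp(Mε) - 1 < |A|/S
  have hlog : M * ε < Real.log (1 + |A| / S) := by
    rw [div_mul_eq_mul_div, lt_div_iff₀ hMpos, mul_comm] at hε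
    linarith [hε]
  have hexp : Real.exp (M * ε) < 1 + |A| / S := by
    have h1 : (0:ℝ) < 1 + |A| / S := by positivity
    calc Real.exp (M * ε) < Real.exp (Real.log (1 + |A| / S)) := Real.exp_lt_exp.mpr hlog
      _ = 1 + |A| / S := Real.exp_log h1
  have hkey : S * (Real.exp (M * ε) - 1) < |A| := by
    have := (mul_lt_mul_iff_right₀ hSpos).mpr (sub_lt_sub_right hexp 1)
    calc S * (Real.exp (M * ε) - 1) < S * (1 + |A| / S - 1) := this
      _ = |A| := by field_simp; ring
  -- per-coordinate perturbation bound
  have hcoord : ∀ j : Fin k, |W.mulVec x' j - W.mulVec x j| ≤ M * ε := by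
    intro j
    have h1 : W.mulVec x' j - W.mulVec x j = ∑ m, W j m * (x' m - x m) := by
      simp [Matrix.mulVec, dotProduct, ← Finset.sum_sub_distrib, mul_sub]
    rw [h1]
    calc |∑ m, W j m * (x' m - x m)| ≤ ∑ m, |W j m * (x' m - x m)| :=
          Finset.abs_sum_le_sum_abs _ _
      _ ≤ ∑ m, |W j m| * ε := by
          refine Finset.sum_le_sum fun m _ => ?_
          rw [abs_mul]
          refine mul_le_mul_of_nonneg_left ?_ (abs_nonneg _)
          calc |(x' - x) m| ≤ ‖x' - x‖ := by
                have := norm_le_pi_norm (x' - x) m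
                simpa using this
            _ ≤ ε := hpert
      _ = (∑ m, |W j m|) * ε := by rw [Finset.sum_mul]
      _ ≤ M * ε := by
          refine mul_le_mul_of_nonneg_right ?_ hεnonneg
          exact Finset.le_sup' (fun i' : Fin k => ∑ m, |W i' m|) (Finset.mem_univ j)
  -- |e^d - 1| ≤ e^{|d|} - 1
  have habs_exp : ∀ d c : ℝ, |d| ≤ c → |Real.exp d - 1| ≤ Real.exp c - 1 := by
    intro d c hdc
    have hd1 : Real.exp d ≤ Real.exp c := Real.exp_le_exp.mpr (le_trans (le_abs_self d) hdc)
    have hd2 : Real.exp (-c) ≤ Real.exp d := Real.exp_le_exp.mpr (by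
      have := neg_abs_le d; linarith)
    have hc0 : 0 ≤ c := le_trans (abs_nonneg d) hdc
    rw [abs_le]
    constructor
    · -- 1 - e^d ≤ e^c - 1, i.e. 2 ≤ e^d + e^c; since e^d ≥ e^{-c}, need 2 ≤ e^{-c}+e^c
      have h2 : (2:ℝ) ≤ Real.exp (-c) + Real.exp c := by
        have h3 : Real.exp (-c) * Real.exp c = 1 := by
          rw [← Real.exp_add]; simp
        nlinarith [sq_nonneg (Real.exp c - 1), Real.exp_pos c]
      linarith
    · linarith
  -- main bound
  have hBA : |B - A| < |A| := by
    have hsum : |B - A| ≤ S * (Real.exp (M * ε) - 1) := by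
      rw [hB', hA', ← Finset.sum_sub_distrib, hSdef, Finset.sum_mul]
      calc |∑ j, ((W j i - W t i) * Real.exp (W.mulVec x' j) -
              (W j i - W t i) * Real.exp (W.mulVec x j))|
          ≤ ∑ j, |(W j i - W t i) * Real.exp (W.mulVec x' j) -
              (W j i - W t i) * Real.exp (W.mulVec x j)| := Finset.abs_sum_le_sum_abs _ _
        _ ≤ ∑ j, |W j i - W t i| * Real.exp (W.mulVec x j) * (Real.exp (M * ε) - 1) := by
            refine Finset.sum_le_sum fun j _ => ?_
            rw [← mul_sub, abs_mul]
            rw [mul_assoc]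
            refine mul_le_mul_of_nonneg_left ?_ (abs_nonneg _)
            have hfac : Real.exp (W.mulVec x' j) - Real.exp (W.mulVec x j) =
                Real.exp (W.mulVec x j) * (Real.exp (W.mulVec x' j - W.mulVec x j) - 1) := by
              rw [mul_sub, mul_one, ← Real.exp_add]; ring_nf
            rw [hfac, abs_mul, abs_of_pos (Real.exp_pos _)]
            exact mul_le_mul_of_nonneg_left
              (habs_exp _ _ (hcoord j)) (le_of_lt (Real.exp_pos _))
    exact lt_of_le_of_lt hsum hkey
  -- conclude sign equality
  rcases lt_or_gt_of_ne hAnz with hAneg | hApos'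
  · have hBneg : B < 0 := by
      have := abs_sub_lt_iff.mp hBA
      rw [abs_of_neg hAneg] at this
      linarith [this.1, this.2]
    rw [Real.sign_of_neg hBneg, Real.sign_of_neg hAneg]
  · have hBpos : 0 < B := by
      have := abs_sub_lt_iff.mp hBA
      rw [abs_of_pos hApos'] at this
      linarith [this.1, this.2]
    rw [Real.sign_of_pos hBpos, Real.sign_of_pos hApos']
end

section
/- Let W be a k×n matrix, y and t class indices with (Wx)_y >= (Wx)_i for all i, and delta in R^n. If (W(x+delta))_y <= (W(x+delta))_i for some i ≠ y, and c < ((Wx)_y - (Wx)_i)^2 / (||W_{y,:} - W_{i,:}||_2^2 * ((Wx)_y - (Wx)_t)) with (Wx)_y > (Wx)_t, then ||delta||_2^2 > c * ((Wx)_y - (Wx)_t). -/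
/-- CW-L2 Cauchy–Schwarz lemma: if the perturbation `δ` flips the top-1 class
from `y` to some `i ≠ y`, and `c` is below the stated bound, then
`‖δ‖₂² > c ((Wx)_y - (Wx)_t)`. -/
theorem cw_flip_requires_large_perturbation (k n : ℕ)
    (W : Matrix (Fin k) (Fin n) ℝ) (x δ : Fin n → ℝ) (y t i : Fin k) (c : ℝ)
    (htop : ∀ i', W.mulVec x i' ≤ W.mulVec x y)
    (hiy : i ≠ y)
    (hflip : W.mulVec (x + δ) y ≤ W.mulVec (x + δ) i)
    (hyt : W.mulVec x t < W.mulVec x y)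
    (hc : c < (W.mulVec x y - W.mulVec x i) ^ 2 /
      ((∑ j, (W y j - W i j) ^ 2) * (W.mulVec x y - W.mulVec x t))) :
    ∑ j, δ j ^ 2 > c * (W.mulVec x y - W.mulVec x t) := by
  set a : ℝ := W.mulVec x y - W.mulVec x i with ha
  set S : ℝ := ∑ j, (W y j - W i j) ^ 2 with hS
  set D : ℝ := W.mulVec x y - W.mulVec x t with hD
  have hD0 : 0 < D := by simp [hD]; linarith [hyt]
  have ha0 : 0 ≤ a := by simp [ha]; linarith [htop i]
  have hS0 : 0 ≤ S := Finset.sum_nonneg fun j _ => sq_nonneg _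
  have hT0 : 0 ≤ ∑ j, δ j ^ 2 := Finset.sum_nonneg fun j _ => sq_nonneg _
  rcases eq_or_lt_of_le hS0 with hSz | hSpos
  · -- S = 0, division by zero: c < a^2 / 0 = 0
    have : c < 0 := by
      have := hc
      rw [← hSz] at this
      simpa using this
    nlinarith
  rcases eq_or_lt_of_le ha0 with haz | hapos
  · have : c < 0 := by
      have := hc
      rw [← haz] at this
      simpa using this
    nlinarith
  -- main case
  have hcs : a ≤ ∑ j, (W i j - W y j) * δ j := by
    have h1 : W.mulVec (x + δ) y = W.mulVec x y + W.mulVec δ y := by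
      rw [Matrix.mulVec_add]; rfl
    have h2 : W.mulVec (x + δ) i = W.mulVec x i + W.mulVec δ i := by
      rw [Matrix.mulVec_add]; rfl
    have h3 : W.mulVec δ i - W.mulVec δ y = ∑ j, (W i j - W y j) * δ j := by
      simp [Matrix.mulVec, dotProduct, sub_mul, Finset.sum_sub_distrib]
    rw [h1, h2] at hflip
    linarith [h3 ▸ (by linarith : a ≤ W.mulVec δ i - W.mulVec δ y)]
  have hcs2 : a ^ 2 ≤ S * ∑ j, δ j ^ 2 := by
    have hsq : (∑ j, (W i j - W y j) * δ j) ^ 2 ≤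
        (∑ j, (W i j - W y j) ^ 2) * ∑ j, δ j ^ 2 :=
      Finset.sum_mul_sq_le_sq_mul_sq _ _ _
    have hSeq : (∑ j, (W i j - W y j) ^ 2) = S := by
      rw [hS]; congr 1; ext j; ring
    have ha2 : a ^ 2 ≤ (∑ j, (W i j - W y j) * δ j) ^ 2 := by
      apply pow_le_pow_left₀ ha0 hcs
    rw [hSeq] at hsq
    linarith
  rw [div_mul_eq_div_div_swap] at hc
  have h1 : c * S < a ^ 2 / D := by
    calc c * S < a ^ 2 / D / S * S := by
          exact mul_lt_mul_of_pos_right hc hSpos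
      _ = a ^ 2 / D := by field_simp
  have h2 : c * S * D < a ^ 2 := by
    calc c * S * D < a ^ 2 / D * D := mul_lt_mul_of_pos_right h1 hD0
      _ = a ^ 2 := by field_simp
  have := lt_of_lt_of_le h2 hcs2
  -- c * S * D < S * T, S > 0 ⇒ c * D < T
  nlinarith
end

section
/- Let W be a k×n matrix, x in R^n with (Wx)_y strictly largest among all (Wx)_i and (Wx)_y > (Wx)_t for target t ≠ y. Suppose c satisfies 0 < c < min_{j ≠ y} ((Wx)_y - (Wx)_j)^2 / (||W_{y,:} - W_{j,:}||_2^2 * ((Wx)_y - (Wx)_t)). Then the global minimizer of L(delta) = ||delta||_2^2 + c * max(max_{i≠t}((W(x+delta))_i) - (W(x+delta))_t, 0) is delta_j = -(c/2)(w_{yj} - w_{tj}). -/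
/-- Exact solution of the simplified CW-L2 objective for the one-layer model:
if `(Wx)_y` is strictly largest and `c` is below the stated bound, the global
minimizer of `L(δ) = ‖δ‖₂² + c·max(max_{i≠t}(W(x+δ))_i - (W(x+δ))_t, 0)` is
`δⱼ = -(c/2)(w_{yj}-w_{tj})`. -/
theorem cw_l2_global_minimizer (k n : ℕ)
    (W : Matrix (Fin k) (Fin n) ℝ) (x : Fin n → ℝ) (y t : Fin k)
    (hty : t ≠ y)
    (htop : ∀ i, i ≠ y → W.mulVec x i < W.mulVec x y)
    (hyt : W.mulVec x t < W.mulVec x y)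
    (c : ℝ) (hc0 : 0 < c)
    (hc : c < (Finset.univ.erase y).inf'
        ⟨t, Finset.mem_erase.mpr ⟨hty, Finset.mem_univ t⟩⟩
        (fun j => (W.mulVec x y - W.mulVec x j) ^ 2 /
          ((∑ m, (W y m - W j m) ^ 2) * (W.mulVec x y - W.mulVec x t))))
    (L : (Fin n → ℝ) → ℝ)
    (hL : ∀ δ, L δ = ∑ j, δ j ^ 2 + c * max
      ((Finset.univ.erase t).sup'
        ⟨y, Finset.mem_erase.mpr ⟨hty.symm, Finset.mem_univ y⟩⟩
        (fun i => W.mulVec (x + δ) i) - W.mulVec (x + δ) t) 0)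
    (δstar : Fin n → ℝ)
    (hδ : ∀ j, δstar j = -(c / 2) * (W y j - W t j)) :
    ∀ δ, δ ≠ δstar → L δstar < L δ := by
  intro δ hne
  set a : Fin k → ℝ := W.mulVec x with ha
  -- expansion of W(x+u)
  have hmv : ∀ (u : Fin n → ℝ) (i : Fin k),
      W.mulVec (x + u) i = a i + ∑ m, W i m * u m := by
    intro u i
    simp [ha, Matrix.mulVec_add, Matrix.mulVec, dotProduct, mul_add,
      Finset.sum_add_distrib]
  set S : Fin k → ℝ := fun j => ∑ m, (W y m - W j m) ^ 2 with hS
  have hd : 0 < a y - a t := sub_pos.mpr hyt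
  have hSpos : ∀ j, j ≠ y → 0 < S j := by
    intro j hj
    rcases (Finset.sum_nonneg fun m _ => sq_nonneg (W y m - W j m)).lt_or_eq with h | h
    · exact h
    · exfalso
      have hrow : ∀ m, W y m = W j m := by
        intro m
        have h0 := (Finset.sum_eq_zero_iff_of_nonneg
            (fun m _ => sq_nonneg (W y m - W j m))).mp h.symm m (Finset.mem_univ m)
        have := sq_eq_zero_iff.mp h0
        linarith
      have haj : a j = a y := by
        simp only [ha, Matrix.mulVec, dotProduct]
        exact (Finset.sum_congr rfl fun m _ => by rw [hrow m]).symm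
      exact absurd (htop j hj) (by simp [haj])
  -- consequences of the bound on c
  have hcj : ∀ j, j ≠ y → c * (S j * (a y - a t)) < (a y - a j) ^ 2 := by
    intro j hj
    have hmem : j ∈ Finset.univ.erase y := Finset.mem_erase.mpr ⟨hj, Finset.mem_univ j⟩
    have h1 := (Finset.lt_inf'_iff _).mp hc j hmem
    have hpos : 0 < S j * (a y - a t) := mul_pos (hSpos j hj) hd
    exact (lt_div_iff₀ hpos).mp h1
  have hct : c * S t < a y - a t := by
    have h1 := hcj t hty
    nlinarith [hd]
  -- difference of inner products at δstar
  have hdiff : ∀ i : Fin k,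
      (∑ m, W y m * δstar m) - (∑ m, W i m * δstar m)
        = -(c/2) * ∑ m, (W y m - W i m) * (W y m - W t m) := by
    intro i
    rw [Finset.mul_sum, ← Finset.sum_sub_distrib]
    exact Finset.sum_congr rfl fun m _ => by rw [hδ m]; ring
  have hSt : (∑ m, (W y m - W t m) * (W y m - W t m)) = S t := by
    rw [hS]
    exact Finset.sum_congr rfl fun m _ => (sq (W y m - W t m)).symm
  -- key bound for i ≠ y
  have hkey : ∀ i, i ≠ y →
      (c/2) * (∑ m, (W y m - W i m) * (W y m - W t m)) ≤ a y - a i := by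
    intro i hi
    set P := ∑ m, (W y m - W i m) * (W y m - W t m) with hP
    have hcs : P ^ 2 ≤ S i * S t := by
      simpa [hP, hS] using Finset.sum_mul_sq_le_sq_mul_sq Finset.univ
        (fun m => W y m - W i m) (fun m => W y m - W t m)
    have hgap : 0 < a y - a i := sub_pos.mpr (htop i hi)
    have h1 := hcj i hi
    have h2 : (c * (S i * (a y - a t))) * (c * S t) < (a y - a i) ^ 2 * (a y - a t) :=
      mul_lt_mul'' h1 hct
        (mul_nonneg hc0.le (mul_nonneg (hSpos i hi).le hd.le))
        (mul_nonneg hc0.le (hSpos t hty).le)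
    have h3 : (c * P) ^ 2 * (a y - a t) ≤ (c * (S i * (a y - a t))) * (c * S t) := by
      nlinarith [mul_le_mul_of_nonneg_left hcs (sq_nonneg c), hd.le]
    have hsq : (c * P) ^ 2 < (a y - a i) ^ 2 := by nlinarith [hd]
    have hlt : c * P < a y - a i := by nlinarith [hsq, hgap]
    rcases le_or_gt 0 P with h | h
    · nlinarith
    · nlinarith
  -- the sup at δstar is attained at y
  have hyt' : y ∈ Finset.univ.erase t := Finset.mem_erase.mpr ⟨hty.symm, Finset.mem_univ y⟩
  have hsup : (Finset.univ.erase t).sup'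
      ⟨y, Finset.mem_erase.mpr ⟨hty.symm, Finset.mem_univ y⟩⟩
      (fun i => W.mulVec (x + δstar) i) = a y + ∑ m, W y m * δstar m := by
    apply le_antisymm
    · apply Finset.sup'_le
      intro i _
      rw [hmv δstar i]
      by_cases hiy : i = y
      · subst hiy; exact le_refl _
      · have hk := hkey i hiy
        have hdi := hdiff i
        linarith
    · have h := Finset.le_sup' (fun i => W.mulVec (x + δstar) i) hyt'
      rwa [hmv δstar y] at h
  -- positivity of the hinge at δstar
  have hgapstar : 0 ≤ (a y + ∑ m, W y m * δstar m) - W.mulVec (x + δstar) t := by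
    rw [hmv δstar t]
    have hdt := hdiff t
    rw [hSt] at hdt
    have hnn : 0 ≤ c * S t := mul_nonneg hc0.le (hSpos t hty).le
    linarith [hct]
  -- value of L at δstar
  have hLstar : L δstar = (∑ j, δstar j ^ 2)
      + c * ((a y + ∑ m, W y m * δstar m) - W.mulVec (x + δstar) t) := by
    rw [hL, hsup, max_eq_left hgapstar]
  -- lower bound for L at δ
  have hlow : (∑ j, δ j ^ 2)
      + c * ((a y + ∑ m, W y m * δ m) - W.mulVec (x + δ) t) ≤ L δ := by
    rw [hL]
    have h1 : a y + ∑ m, W y m * δ m ≤ (Finset.univ.erase t).sup'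
        ⟨y, Finset.mem_erase.mpr ⟨hty.symm, Finset.mem_univ y⟩⟩
        (fun i => W.mulVec (x + δ) i) := by
      have h := Finset.le_sup' (fun i => W.mulVec (x + δ) i) hyt'
      rwa [hmv δ y] at h
    have h2 : (a y + ∑ m, W y m * δ m) - W.mulVec (x + δ) t
        ≤ max ((Finset.univ.erase t).sup'
          ⟨y, Finset.mem_erase.mpr ⟨hty.symm, Finset.mem_univ y⟩⟩
          (fun i => W.mulVec (x + δ) i) - W.mulVec (x + δ) t) 0 := by
      refine le_trans (by linarith) (le_max_left _ _)
    nlinarith [mul_le_mul_of_nonneg_left h2 hc0.le]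
  -- quadratic identity
  have hquad : (∑ j, δ j ^ 2) + c * ((∑ m, W y m * δ m) - ∑ m, W t m * δ m)
      = (∑ j, δstar j ^ 2) + c * ((∑ m, W y m * δstar m) - ∑ m, W t m * δstar m)
        + ∑ j, (δ j - δstar j) ^ 2 := by
    have hform : ∀ u : Fin n → ℝ,
        (∑ j, u j ^ 2) + c * ((∑ m, W y m * u m) - ∑ m, W t m * u m)
          = ∑ j, (u j ^ 2 + c * ((W y j - W t j) * u j)) := by
      intro u
      rw [Finset.sum_add_distrib]
      congr 1
      rw [← Finset.sum_sub_distrib, Finset.mul_sum]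
      exact Finset.sum_congr rfl fun m _ => by ring
    rw [hform δ, hform δstar, ← Finset.sum_add_distrib]
    exact Finset.sum_congr rfl fun j _ => by rw [hδ j]; ring
  -- strict positivity of the square term
  have hpos : 0 < ∑ j, (δ j - δstar j) ^ 2 := by
    obtain ⟨j0, hj0⟩ := Function.ne_iff.mp hne
    refine Finset.sum_pos' (fun j _ => sq_nonneg _) ⟨j0, Finset.mem_univ j0, ?_⟩
    have : δ j0 - δstar j0 ≠ 0 := sub_ne_zero.mpr hj0
    positivity
  -- conclude
  have hTt : ∀ u : Fin n → ℝ, W.mulVec (x + u) t = a t + ∑ m, W t m * u m :=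
    fun u => hmv u t
  rw [hLstar]
  rw [hTt δstar] at *
  have hlow' := hlow
  rw [hTt δ] at hlow'
  nlinarith [hlow', hquad, hpos]
end
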